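/- The integral over the unit sphere S^d (d ≥ 2) of the function v₂(ω)³, where v₂(ω) = ω₁ω₂ + ω₂ω₃ + ω₃ω₁, equals 6 times the integral over S^d of ω₁²ω₂²ω₃², and in particular is strictly positive. -/

import Mathlib

open MeasureTheory Real

noncomputable section

/-- The standard surface measure on the unit sphere in `ℝⁿ`. -/
def sphereμ (n : ℕ) : Measure (Metric.sphere (0 : EuclideanSpace ℝ (Fin n)) 1) :=
  (volume : Measure (EuclideanSpace ℝ (Fin n))).toSphere

open Metric Set
open scoped Pointwise

namespace SphereAux

variable {n : ℕ}

local notation "E" n => EuclideanSpace ℝ (Fin n)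

/-- The sphere self-map induced by a linear isometry equivalence. -/
def sphereMap (e : (E n) ≃ₗᵢ[ℝ] (E n)) :
    sphere (0 : E n) 1 → sphere (0 : E n) 1 :=
  fun x => ⟨e x, by
    have h := mem_sphere_zero_iff_norm.mp x.2
    simpa [mem_sphere_zero_iff_norm, e.norm_map] using h⟩

@[simp] lemma coe_sphereMap (e : (E n) ≃ₗᵢ[ℝ] (E n)) (x : sphere (0 : E n) 1) :
    ((sphereMap e x : E n)) = e (x : E n) := rfl

lemma continuous_sphereMap (e : (E n) ≃ₗᵢ[ℝ] (E n)) : Continuous (sphereMap e) :=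
  Continuous.subtype_mk (e.continuous.comp continuous_subtype_val) _

/-- `sphereMap e` as a homeomorphism. -/
def sphereHomeo (e : (E n) ≃ₗᵢ[ℝ] (E n)) :
    sphere (0 : E n) 1 ≃ₜ sphere (0 : E n) 1 where
  toFun := sphereMap e
  invFun := sphereMap e.symm
  left_inv x := Subtype.ext <| by simp
  right_inv x := Subtype.ext <| by simp
  continuous_toFun := continuous_sphereMap e
  continuous_invFun := continuous_sphereMap e.symm

lemma sphereMap_image_preimage (e : (E n) ≃ₗᵢ[ℝ] (E n)) (s : Set (sphere (0 : E n) 1)) :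
    (Subtype.val '' (sphereMap e ⁻¹' s)) = e ⁻¹' (Subtype.val '' s) := by
  ext x
  constructor
  · rintro ⟨y, hy, rfl⟩
    exact ⟨sphereMap e y, hy, rfl⟩
  · rintro ⟨y, hy, hxy⟩
    have hx : x ∈ sphere (0 : E n) 1 := by
      have h1 : ‖e x‖ = 1 := by rw [← hxy]; exact mem_sphere_zero_iff_norm.mp y.2
      rw [e.norm_map] at h1
      exact mem_sphere_zero_iff_norm.mpr h1
    refine ⟨⟨x, hx⟩, ?_, rfl⟩
    show sphereMap e ⟨x, hx⟩ ∈ s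
    have : sphereMap e ⟨x, hx⟩ = y := Subtype.ext hxy.symm
    rw [this]; exact hy

lemma smul_preimage (e : (E n) ≃ₗᵢ[ℝ] (E n)) (T : Set (E n)) :
    Ioo (0:ℝ) 1 • (e ⁻¹' T) = e ⁻¹' (Ioo (0:ℝ) 1 • T) := by
  ext x
  constructor
  · rintro ⟨r, hr, y, hy, rfl⟩
    exact ⟨r, hr, e y, hy, (_root_.map_smul e r y).symm⟩
  · rintro ⟨r, hr, y, hy, hxy⟩
    refine ⟨r, hr, e.symm y, by simp [hy], ?_⟩
    apply e.injective
    rw [_root_.map_smul, e.apply_symm_apply]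
    exact hxy

lemma volume_preimage (e : (E n) ≃ₗᵢ[ℝ] (E n)) (A : Set (E n)) :
    volume (e ⁻¹' A) = volume A := by
  calc volume (e ⁻¹' A) = Measure.map e.toMeasurableEquiv volume A :=
        (e.toMeasurableEquiv.map_apply A).symm
    _ = volume A := by
        rw [show ((e.toMeasurableEquiv : (E n) → E n)) = e from rfl, e.measurePreserving.map_eq]

lemma measurePreserving_sphereMap (e : (E n) ≃ₗᵢ[ℝ] (E n)) :
    MeasurePreserving (sphereMap e) (sphereμ n) (sphereμ n) := by
  refine ⟨(continuous_sphereMap e).measurable, ?_⟩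
  refine Measure.ext fun s hs => ?_
  rw [Measure.map_apply (continuous_sphereMap e).measurable hs]
  rw [sphereμ, Measure.toSphere_apply' _ ((continuous_sphereMap e).measurable hs),
    Measure.toSphere_apply' _ hs, sphereMap_image_preimage, smul_preimage, volume_preimage]

lemma integral_comp_sphereMap (e : (E n) ≃ₗᵢ[ℝ] (E n)) (f : sphere (0 : E n) 1 → ℝ) :
    ∫ x, f (sphereMap e x) ∂(sphereμ n) = ∫ x, f x ∂(sphereμ n) :=
  (measurePreserving_sphereMap e).integral_comp (sphereHomeo e).measurableEmbedding f

instance : (sphereμ n).IsOpenPosMeasure := by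
  constructor
  intro U hU hUne
  obtain ⟨x, hx⟩ := hUne
  obtain ⟨t, ht, rfl⟩ := isOpen_induced_iff.mp hU
  have hnz : (0 : E n) ∉ sphere (0 : E n) 1 := by simp
  -- the open cone
  set g : (E n) → E n := fun y => ‖y‖⁻¹ • y with hg
  have hgc : ContinuousOn g ({0}ᶜ : Set (E n)) := by
    apply ContinuousOn.fun_smul _ continuousOn_id
    exact (continuousOn_id.norm).inv₀ (fun y hy => norm_ne_zero_iff.mpr hy)
  have hopen : IsOpen (({0}ᶜ ∩ g ⁻¹' t) ∩ ball (0 : E n) 1) :=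
    (hgc.isOpen_inter_preimage isOpen_compl_singleton ht).inter isOpen_ball
  have hsub : (({0}ᶜ ∩ g ⁻¹' t) ∩ ball (0 : E n) 1) ⊆
      Ioo (0:ℝ) 1 • (Subtype.val '' ((Subtype.val : sphere (0 : E n) 1 → E n) ⁻¹' t)) := by
    rintro y ⟨⟨hy0, hyt⟩, hyb⟩
    have hy0' : y ≠ 0 := hy0
    have hnorm : 0 < ‖y‖ := norm_pos_iff.mpr hy0'
    have hz : ‖g y‖ = 1 := by
      rw [hg]; simp only [norm_smul, norm_inv, norm_norm]
      field_simp
    refine ⟨‖y‖, ⟨hnorm, mem_ball_zero_iff.mp hyb⟩, g y, ?_, ?_⟩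
    · exact ⟨⟨g y, mem_sphere_zero_iff_norm.mpr hz⟩, hyt, rfl⟩
    · rw [hg]; simp only [smul_smul]
      rw [mul_inv_cancel₀ hnorm.ne', one_smul]
  have hne : (({0}ᶜ ∩ g ⁻¹' t) ∩ ball (0 : E n) 1).Nonempty := by
    refine ⟨(2⁻¹ : ℝ) • (x : E n), ⟨⟨?_, ?_⟩, ?_⟩⟩
    · have hxn1 : ‖(x : E n)‖ = 1 := mem_sphere_zero_iff_norm.mp x.2
      have hx0 : (x : E n) ≠ 0 := by intro h; rw [h] at hxn1; simp at hxn1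
      simp only [mem_compl_iff, mem_singleton_iff]
      exact smul_ne_zero (by norm_num) hx0
    · have hxn : ‖(x : E n)‖ = 1 := mem_sphere_zero_iff_norm.mp x.2
      have h2 : ‖(2⁻¹ : ℝ) • (x : E n)‖ = 2⁻¹ := by
        rw [norm_smul, hxn, mul_one, Real.norm_eq_abs]
        norm_num
      have : g ((2⁻¹ : ℝ) • (x : E n)) = (x : E n) := by
        rw [hg]
        show ‖(2⁻¹ : ℝ) • (x : E n)‖⁻¹ • ((2⁻¹ : ℝ) • (x : E n)) = (x : E n)
        rw [h2, smul_smul]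
        norm_num
      rw [mem_preimage, this]
      exact hx
    · have hxn : ‖(x : E n)‖ = 1 := mem_sphere_zero_iff_norm.mp x.2
      rw [mem_ball_zero_iff, norm_smul, hxn]
      norm_num
  have hvol : 0 < volume (({0}ᶜ ∩ g ⁻¹' t) ∩ ball (0 : E n) 1) :=
    hopen.measure_pos volume hne
  have hn : 0 < n := by
    rcases Nat.eq_zero_or_pos n with h | h
    · exfalso; subst h
      have h1 := mem_sphere_zero_iff_norm.mp x.2
      rw [show ((x : E 0)) = 0 from Subsingleton.elim _ _] at h1
      simp at h1
    · exact h
  rw [sphereμ, Measure.toSphere_apply' _ hU.measurableSet]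
  apply mul_ne_zero
  · simp [finrank_euclideanSpace_fin, hn.ne']
  · exact ((hvol.trans_le (measure_mono hsub)).ne')

end SphereAux

namespace Part2

variable {n : ℕ}
open SphereAux

/-- Negation of the `i`-th coordinate, as a linear isometry equivalence. -/
def negCoord (i : Fin n) : (EuclideanSpace ℝ (Fin n)) ≃ₗᵢ[ℝ] (EuclideanSpace ℝ (Fin n)) :=
  LinearIsometryEquiv.piLpCongrRight 2
    (fun j => if j = i then LinearIsometryEquiv.neg ℝ else LinearIsometryEquiv.refl ℝ ℝ)

lemma negCoord_apply (i : Fin n) (x : EuclideanSpace ℝ (Fin n)) (j : Fin n) :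
    negCoord i x j = if j = i then -x j else x j := by
  simp only [negCoord, LinearIsometryEquiv.piLpCongrRight_apply]
  by_cases h : j = i <;> simp [h]

lemma continuous_coord (i : Fin n) :
    Continuous (fun ω : sphere (0 : EuclideanSpace ℝ (Fin n)) 1 =>
      (ω : EuclideanSpace ℝ (Fin n)) i) :=
  (continuous_apply i).comp ((PiLp.continuous_ofLp 2 _).comp continuous_subtype_val)

lemma integrable_of_continuous (f : sphere (0 : EuclideanSpace ℝ (Fin n)) 1 → ℝ)
    (hf : Continuous f) : Integrable f (sphereμ n) := by
  haveI : IsFiniteMeasure (sphereμ n) :=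
    inferInstanceAs (IsFiniteMeasure (volume : Measure (EuclideanSpace ℝ (Fin n))).toSphere)
  haveI : IsFiniteMeasureOnCompacts (sphereμ n) := ⟨fun _ _ => measure_lt_top _ _⟩
  have h := hf.continuousOn.integrableOn_compact (μ := sphereμ n) isCompact_univ
  rwa [integrableOn_univ] at h

end Part2

namespace Part3
open SphereAux Part2

lemma one_ne (m : ℕ) : (1 : Fin (m+3)) ≠ 0 := by
  simp [Fin.ext_iff]

lemma two_ne_zero' (m : ℕ) : (2 : Fin (m+3)) ≠ 0 := by
  simp [Fin.ext_iff, Nat.mod_eq_of_lt (show 2 < m + 3 by omega)]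

lemma two_ne_one' (m : ℕ) : (2 : Fin (m+3)) ≠ 1 := by
  simp [Fin.ext_iff, Nat.mod_eq_of_lt (show 2 < m + 3 by omega)]

/-- The point `(1/√3, 1/√3, 1/√3, 0, …)` of `ℝ^{m+3}`. -/
def pt (m : ℕ) : EuclideanSpace ℝ (Fin (m+3)) :=
  (WithLp.equiv 2 _).symm (fun j : Fin (m+3) => if (j : ℕ) < 3 then Real.sqrt 3⁻¹ else 0)

lemma pt_apply (m : ℕ) (j : Fin (m+3)) :
    pt m j = if (j : ℕ) < 3 then Real.sqrt 3⁻¹ else 0 := rfl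

lemma pt_sq (m : ℕ) (j : Fin (m+3)) (hj : (j : ℕ) < 3) : pt m j ^ 2 = 3⁻¹ := by
  rw [pt_apply, if_pos hj, Real.sq_sqrt (by norm_num)]

lemma pt_mem (m : ℕ) : pt m ∈ sphere (0 : EuclideanSpace ℝ (Fin (m+3))) 1 := by
  rw [mem_sphere_zero_iff_norm, EuclideanSpace.norm_eq]
  have : ∑ j : Fin (m+3), ‖pt m j‖ ^ 2 = 1 := by
    simp only [Real.norm_eq_abs, sq_abs]
    rw [Fin.sum_univ_succ, Fin.sum_univ_succ, Fin.sum_univ_succ]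
    have h0 : pt m 0 ^ 2 = 3⁻¹ := pt_sq m 0 (by simp)
    have h1 : pt m (Fin.succ 0) ^ 2 = 3⁻¹ := pt_sq m _ (by simp)
    have h2 : pt m (Fin.succ (Fin.succ 0)) ^ 2 = 3⁻¹ := pt_sq m _ (by simp [Nat.mod_eq_of_lt (show 2 < m + 3 by omega)])
    have h3 : ∀ i : Fin m, pt m (Fin.succ (Fin.succ (Fin.succ i))) ^ 2 = 0 := by
      intro i
      rw [pt_apply, if_neg (by simp)]
      norm_num
    rw [h0, h1, h2, Finset.sum_congr rfl (fun i _ => h3 i)]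
    norm_num
  rw [this, Real.sqrt_one]

end Part3

open SphereAux Part2 Part3 in
/-- For `d = m + 2 ≥ 2`, the integral over the unit sphere `S^d ⊆ ℝ^{d+1}` of
`v₂(ω)³`, where `v₂(ω) = ω₁ω₂ + ω₂ω₃ + ω₃ω₁`, equals
`6 ∫_{S^d} ω₁²ω₂²ω₃² dω`, and in particular is strictly positive. -/
theorem sphere_integral_v2_cubed (m : ℕ) :
    (∫ ω : Metric.sphere (0 : EuclideanSpace ℝ (Fin (m+3))) 1,
        ((ω : EuclideanSpace ℝ (Fin (m+3))) 0 * (ω : EuclideanSpace ℝ (Fin (m+3))) 1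
          + (ω : EuclideanSpace ℝ (Fin (m+3))) 1 * (ω : EuclideanSpace ℝ (Fin (m+3))) 2
          + (ω : EuclideanSpace ℝ (Fin (m+3))) 2 * (ω : EuclideanSpace ℝ (Fin (m+3))) 0) ^ 3
        ∂ sphereμ (m+3)
      = 6 * ∫ ω : Metric.sphere (0 : EuclideanSpace ℝ (Fin (m+3))) 1,
          ((ω : EuclideanSpace ℝ (Fin (m+3))) 0) ^ 2 * ((ω : EuclideanSpace ℝ (Fin (m+3))) 1) ^ 2
            * ((ω : EuclideanSpace ℝ (Fin (m+3))) 2) ^ 2 ∂ sphereμ (m+3))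
    ∧ 0 < ∫ ω : Metric.sphere (0 : EuclideanSpace ℝ (Fin (m+3))) 1,
        ((ω : EuclideanSpace ℝ (Fin (m+3))) 0 * (ω : EuclideanSpace ℝ (Fin (m+3))) 1
          + (ω : EuclideanSpace ℝ (Fin (m+3))) 1 * (ω : EuclideanSpace ℝ (Fin (m+3))) 2
          + (ω : EuclideanSpace ℝ (Fin (m+3))) 2 * (ω : EuclideanSpace ℝ (Fin (m+3))) 0) ^ 3
        ∂ sphereμ (m+3) := by
  set μ := sphereμ (m+3) with hμ
  set F : sphere (0 : EuclideanSpace ℝ (Fin (m+3))) 1 → ℝ := fun ω =>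
    ((ω : EuclideanSpace ℝ (Fin (m+3))) 0 * (ω : EuclideanSpace ℝ (Fin (m+3))) 1
      + (ω : EuclideanSpace ℝ (Fin (m+3))) 1 * (ω : EuclideanSpace ℝ (Fin (m+3))) 2
      + (ω : EuclideanSpace ℝ (Fin (m+3))) 2 * (ω : EuclideanSpace ℝ (Fin (m+3))) 0) ^ 3
    with hF_def
  set G : sphere (0 : EuclideanSpace ℝ (Fin (m+3))) 1 → ℝ := fun ω =>
    ((ω : EuclideanSpace ℝ (Fin (m+3))) 0) ^ 2 * ((ω : EuclideanSpace ℝ (Fin (m+3))) 1) ^ 2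
      * ((ω : EuclideanSpace ℝ (Fin (m+3))) 2) ^ 2 with hG_def
  have hFc : Continuous F := by
    apply Continuous.pow
    exact (((continuous_coord 0).mul (continuous_coord 1)).add
      ((continuous_coord 1).mul (continuous_coord 2))).add
      ((continuous_coord 2).mul (continuous_coord 0))
  have hGc : Continuous G :=
    (((continuous_coord 0).pow 2).mul ((continuous_coord 1).pow 2)).mul
      ((continuous_coord 2).pow 2)
  set g0 := sphereMap (negCoord (0 : Fin (m+3))) with hg0
  set g1 := sphereMap (negCoord (1 : Fin (m+3))) with hg1
  have key : ∀ ω, F ω + F (g0 ω) + F (g1 ω) + F (g0 (g1 ω)) = 24 * G ω := by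
    intro ω
    have A : ∀ (ω' : sphere (0 : EuclideanSpace ℝ (Fin (m+3))) 1) (j : Fin (m+3)),
        ((g0 ω' : EuclideanSpace ℝ (Fin (m+3))) j)
          = if j = 0 then -(ω' : EuclideanSpace ℝ (Fin (m+3))) j
            else (ω' : EuclideanSpace ℝ (Fin (m+3))) j := by
      intro ω' j; rw [hg0, coe_sphereMap, negCoord_apply]
    have B : ∀ (ω' : sphere (0 : EuclideanSpace ℝ (Fin (m+3))) 1) (j : Fin (m+3)),
        ((g1 ω' : EuclideanSpace ℝ (Fin (m+3))) j)
          = if j = 1 then -(ω' : EuclideanSpace ℝ (Fin (m+3))) j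
            else (ω' : EuclideanSpace ℝ (Fin (m+3))) j := by
      intro ω' j; rw [hg1, coe_sphereMap, negCoord_apply]
    have h00 := eq_true (rfl : (0 : Fin (m+3)) = 0)
    have h11 := eq_true (rfl : (1 : Fin (m+3)) = 1)
    have h10 := eq_false (one_ne m)
    have h20 := eq_false (two_ne_zero' m)
    have h01 := eq_false (Ne.symm (one_ne m))
    have h21 := eq_false (two_ne_one' m)
    simp only [hF_def, hG_def, A, B, h00, h11, h10, h20, h01, h21, if_true, if_false]
    ring
  have hF : Integrable F μ := integrable_of_continuous _ hFc
  have hFg0 : Integrable (fun ω => F (g0 ω)) μ :=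
    integrable_of_continuous _ (hFc.comp (continuous_sphereMap _))
  have hFg1 : Integrable (fun ω => F (g1 ω)) μ :=
    integrable_of_continuous _ (hFc.comp (continuous_sphereMap _))
  have hFg01 : Integrable (fun ω => F (g0 (g1 ω))) μ :=
    integrable_of_continuous _
      ((hFc.comp (continuous_sphereMap _)).comp (continuous_sphereMap _))
  have e0 : ∫ ω, F (g0 ω) ∂μ = ∫ ω, F ω ∂μ := integral_comp_sphereMap _ F
  have e1 : ∫ ω, F (g1 ω) ∂μ = ∫ ω, F ω ∂μ := integral_comp_sphereMap _ F
  have e01 : ∫ ω, F (g0 (g1 ω)) ∂μ = ∫ ω, F (g0 ω) ∂μ :=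
    integral_comp_sphereMap (negCoord 1) (fun ω => F (g0 ω))
  have big : (∫ ω, F ω ∂μ) + (∫ ω, F ω ∂μ) + (∫ ω, F ω ∂μ) + (∫ ω, F ω ∂μ)
      = 24 * ∫ ω, G ω ∂μ := by
    calc (∫ ω, F ω ∂μ) + (∫ ω, F ω ∂μ) + (∫ ω, F ω ∂μ) + (∫ ω, F ω ∂μ)
        = ∫ ω, (F ω + F (g0 ω) + F (g1 ω) + F (g0 (g1 ω))) ∂μ := by
          have hadd1 := integral_add ((hF.add hFg0).add hFg1) hFg01
          have hadd2 := integral_add (hF.add hFg0) hFg1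
          have hadd3 := integral_add hF hFg0
          simp only [Pi.add_apply] at hadd1 hadd2 hadd3
          rw [hadd1, hadd2, hadd3, e0, e1, e01, e0]
      _ = ∫ ω, 24 * G ω ∂μ := by
          exact integral_congr_ae (Filter.Eventually.of_forall key)
      _ = 24 * ∫ ω, G ω ∂μ := integral_const_mul 24 G
  have hGnn : 0 ≤ G := by
    intro ω
    rw [hG_def]
    positivity
  have hJpos : 0 < ∫ ω, G ω ∂μ := by
    rw [integral_pos_iff_support_of_nonneg hGnn (integrable_of_continuous _ hGc)]
    have hopen : IsOpen (Function.support G) := by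
      rw [Function.support_eq_preimage]
      exact isOpen_compl_singleton.preimage hGc
    haveI : μ.IsOpenPosMeasure :=
      inferInstanceAs ((sphereμ (m+3)).IsOpenPosMeasure)
    have hsupp : (⟨pt m, pt_mem m⟩ : sphere (0 : EuclideanSpace ℝ (Fin (m+3))) 1)
        ∈ Function.support G := by
      rw [Function.mem_support, hG_def]
      show ¬ ((pt m 0) ^ 2 * (pt m 1) ^ 2 * (pt m 2) ^ 2 = 0)
      rw [pt_sq m 0 (by simp), pt_sq m 1 (by simp), pt_sq m 2 (by simp [Nat.mod_eq_of_lt (show 2 < m + 3 by omega)])]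
      norm_num
    exact hopen.measure_pos μ ⟨_, hsupp⟩
  have hIJ : (∫ ω, F ω ∂μ) = 6 * ∫ ω, G ω ∂μ := by linarith
  exact ⟨hIJ, by rw [hIJ]; linarith⟩
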